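/- Let p be an odd prime, let q ∈ ℚ_p with q ≠ 1 satisfy ‖1 - q‖_p < 1, let n be a natural number, and let x be a natural number. For each k put E_k = (1+q)·(1/(1-q))^k · Σ_{j=0}^{k} (k choose j)·(-1)^j/(1 + q^{j+1}) (the q-Euler number E_{k,q}). Then the sequence N ↦ ((1+q)/(1 + q^{p^N})) · Σ_{t=0}^{p^N - 1} [x+t]_q^n · (-q)^t converges in ℚ_p to Σ_{k=0}^{n} (n choose k) · q^{k x} · E_k · [x]_q^{n-k}. In other words, the q-Euler polynomial E_{n,q}(x) = ∫_{ℤ_p} [x+t]_q^n dμ_{-q}(t) satisfies E_{n,q}(x) = Σ_{k=0}^{n} (n choose k) q^{kx} E_{k,q} [x]_q^{n-k}. -/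

import Mathlib

open Filter

section Aux
variable {p : ℕ} [hp : Fact p.Prime]

lemma aux_norm_q_le_one {q : ℚ_[p]} (hq : ‖1 - q‖ < 1) : ‖q‖ ≤ 1 := by
  have h : q = 1 + (-(1 - q)) := by ring
  calc ‖q‖ = ‖(1:ℚ_[p]) + (-(1-q))‖ := by rw [← h]
    _ ≤ max ‖(1:ℚ_[p])‖ ‖-(1-q)‖ := Padic.nonarchimedean _ _
    _ ≤ 1 := by rw [norm_neg, norm_one]; exact max_le le_rfl hq.le

lemma aux_pow_sub_one {q : ℚ_[p]} (hq : ‖1 - q‖ < 1) (m : ℕ) : ‖q ^ m - 1‖ ≤ ‖1 - q‖ := by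
  induction m with
  | zero => simp
  | succ m ih =>
    have h1 : q ^ (m+1) - 1 = q ^ m * (q - 1) + (q ^ m - 1) := by ring
    calc ‖q ^ (m+1) - 1‖ = ‖q ^ m * (q - 1) + (q ^ m - 1)‖ := by rw [h1]
      _ ≤ max ‖q ^ m * (q - 1)‖ ‖q ^ m - 1‖ := Padic.nonarchimedean _ _
      _ ≤ ‖1 - q‖ := by
          apply max_le _ ih
          rw [norm_mul, norm_sub_rev]
          calc ‖q ^ m‖ * ‖1 - q‖ ≤ 1 * ‖1 - q‖ := by
                apply mul_le_mul_of_nonneg_right _ (norm_nonneg _)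
                calc ‖q ^ m‖ = ‖q‖ ^ m := norm_pow _ _
                  _ ≤ 1 := pow_le_one₀ (norm_nonneg _) (aux_norm_q_le_one hq)
            _ = ‖1 - q‖ := one_mul _

lemma aux_norm_two (hodd : Odd p) : ‖(2 : ℚ_[p])‖ = 1 := by
  have h1 : ‖(2 : ℚ_[p])‖ ≤ 1 := by
    have := Padic.norm_int_le_one (p := p) 2
    simpa using this
  have h2 : ¬ ‖(2 : ℚ_[p])‖ < 1 := by
    intro h
    have := (Padic.norm_intCast_lt_one_iff (p := p) (k := 2)).mp (by simpa using h)
    have hdvd : p ∣ 2 := by exact_mod_cast this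
    have := (Nat.prime_dvd_prime_iff_eq hp.out Nat.prime_two).mp hdvd
    rw [this] at hodd
    exact (Nat.not_odd_iff_even.mpr (by decide)) hodd
  linarith [lt_or_eq_of_le h1]
  
lemma aux_one_add_pow_ne (hodd : Odd p) {q : ℚ_[p]} (hq : ‖1 - q‖ < 1) (m : ℕ) :
    1 + q ^ m ≠ 0 := by
  intro h
  have hm : q ^ m = -1 := by linear_combination h
  have h2 : ‖q ^ m - 1‖ = ‖(2 : ℚ_[p])‖ := by
    rw [hm]; rw [show (-1 : ℚ_[p]) - 1 = -2 by ring, norm_neg]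
  have := aux_pow_sub_one hq m
  rw [h2, aux_norm_two hodd] at this
  linarith

lemma aux_tendsto {q : ℚ_[p]} (hq : ‖1 - q‖ < 1) :
    Tendsto (fun N : ℕ => q ^ p ^ N) atTop (nhds 1) := by
  set c := max ‖(p : ℚ_[p])‖ ‖1 - q‖ with hc
  have hc1 : c < 1 := max_lt Padic.norm_p_lt_one hq
  have hc0 : (0:ℝ) ≤ c := le_max_of_le_left (norm_nonneg _)
  have step : ∀ a : ℚ_[p], ‖a - 1‖ ≤ ‖1 - q‖ → ‖a ^ p - 1‖ ≤ c * ‖a - 1‖ := by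
    intro a ha
    have ha1 : ‖1 - a‖ < 1 := by rw [norm_sub_rev]; exact lt_of_le_of_lt ha hq
    have key : a ^ p - 1 = (∑ i ∈ Finset.range p, a ^ i) * (a - 1) := (geom_sum_mul a p).symm
    have hsum : (∑ i ∈ Finset.range p, a ^ i)
        = (∑ i ∈ Finset.range p, (a ^ i - 1)) + (p : ℚ_[p]) := by
      rw [Finset.sum_sub_distrib]; simp
    have hb1 : ‖∑ i ∈ Finset.range p, (a ^ i - 1)‖ ≤ ‖1 - q‖ := by
      have hnn : (0:ℝ) ≤ ‖1 - q‖ := norm_nonneg _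
      induction (Finset.range p) using Finset.induction with
      | empty => simpa using hnn
      | @insert i s his ih =>
        rw [Finset.sum_insert his]
        refine le_trans (Padic.nonarchimedean _ _) (max_le ?_ ih)
        calc ‖a ^ i - 1‖ ≤ ‖1 - a‖ := aux_pow_sub_one ha1 i
          _ ≤ ‖1 - q‖ := by rw [norm_sub_rev]; exact ha
    have hbound : ‖∑ i ∈ Finset.range p, a ^ i‖ ≤ c := by
      rw [hsum]
      refine le_trans (Padic.nonarchimedean _ _) (max_le ?_ ?_)
      · exact le_trans hb1 (le_max_right _ _)
      · exact le_max_left _ _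
    calc ‖a ^ p - 1‖ = ‖∑ i ∈ Finset.range p, a ^ i‖ * ‖a - 1‖ := by rw [key, norm_mul]
      _ ≤ c * ‖a - 1‖ := mul_le_mul_of_nonneg_right hbound (norm_nonneg _)
  have bound : ∀ N : ℕ, ‖q ^ p ^ N - 1‖ ≤ c ^ N * ‖1 - q‖ ∧ ‖q ^ p ^ N - 1‖ ≤ ‖1 - q‖ := by
    intro N
    induction N with
    | zero => simp [norm_sub_rev]
    | succ N ih =>
      have hp1 : q ^ p ^ (N+1) = (q ^ p ^ N) ^ p := by rw [← pow_mul, pow_succ]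
      have h1 : ‖q ^ p ^ (N+1) - 1‖ ≤ c * ‖q ^ p ^ N - 1‖ := by
        rw [hp1]; exact step _ ih.2
      constructor
      · calc ‖q ^ p ^ (N+1) - 1‖ ≤ c * ‖q ^ p ^ N - 1‖ := h1
          _ ≤ c * (c ^ N * ‖1 - q‖) := mul_le_mul_of_nonneg_left ih.1 hc0
          _ = c ^ (N+1) * ‖1 - q‖ := by ring
      · calc ‖q ^ p ^ (N+1) - 1‖ ≤ c * ‖q ^ p ^ N - 1‖ := h1
          _ ≤ 1 * ‖1 - q‖ := mul_le_mul hc1.le ih.2 (norm_nonneg _) zero_le_one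
          _ = ‖1 - q‖ := one_mul _
  have h0 : Tendsto (fun N : ℕ => c ^ N * ‖1 - q‖) atTop (nhds 0) := by
    simpa using (tendsto_pow_atTop_nhds_zero_of_lt_one hc0 hc1).mul_const ‖1 - q‖
  have := squeeze_zero_norm (fun N => (bound N).1) h0
  have h2 := this.add_const 1
  simpa using h2

end Aux


lemma binom_inner {R : Type*} [CommRing R] (a b : R) (hab : a + b = 1) (n j : ℕ) (hj : j ≤ n) :
    ∑ k ∈ Finset.Ico j (n+1), (n.choose k : R) * (k.choose j : R) * a ^ k * b ^ (n - k)
      = (n.choose j : R) * a ^ j := by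
  rw [Finset.sum_Ico_eq_sum_range]
  have h1 : n + 1 - j = (n - j) + 1 := by omega
  rw [h1]
  have hterm : ∀ m ∈ Finset.range ((n-j)+1),
      (n.choose (j+m) : R) * ((j+m).choose j : R) * a ^ (j+m) * b ^ (n-(j+m))
      = ((n.choose j : R) * a ^ j) * (a ^ m * b ^ ((n-j)-m) * ((n-j).choose m : R)) := by
    intro m hm
    have hm' : m ≤ n - j := by simpa [Nat.lt_succ_iff] using hm
    have h2 : n.choose (j+m) * (j+m).choose j = n.choose j * (n-j).choose m := by
      have := Nat.choose_mul (n := n) (k := j + m) (show j ≤ j + m by omega)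
      simpa using this
    have h3 : n - (j+m) = (n-j) - m := by omega
    rw [h3]
    have h4 : (n.choose (j+m) : R) * ((j+m).choose j : R) = (n.choose j : R) * ((n-j).choose m : R) := by
      exact_mod_cast congrArg (Nat.cast : ℕ → R) h2
    calc (n.choose (j+m) : R) * ((j+m).choose j : R) * a ^ (j+m) * b ^ ((n-j)-m)
        = ((n.choose (j+m) : R) * ((j+m).choose j : R)) * (a ^ j * a ^ m) * b ^ ((n-j)-m) := by
          rw [pow_add]
      _ = ((n.choose j : R) * ((n-j).choose m : R)) * (a ^ j * a ^ m) * b ^ ((n-j)-m) := by rw [h4]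
      _ = ((n.choose j : R) * a ^ j) * (a ^ m * b ^ ((n-j)-m) * ((n-j).choose m : R)) := by ring
  rw [Finset.sum_congr rfl hterm, ← Finset.mul_sum, ← add_pow, hab, one_pow, mul_one]

/-- The `q`-Euler polynomial `E_{n,q}(x) = ∫_{ℤ_p} [x+t]_q^n dμ_{-q}(t)` equals
`∑_{k=0}^n (n choose k) q^{kx} E_{k,q} [x]_q^{n-k}`. -/
theorem q_euler_polynomial_expansion (p : ℕ) [Fact p.Prime] (hodd : Odd p)
    (q : ℚ_[p]) (hq1 : q ≠ 1) (hq : ‖1 - q‖ < 1) (n : ℕ) (x : ℕ)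
    (E : ℕ → ℚ_[p])
    (hE : ∀ k : ℕ, E k = (1 + q) * (1 / (1 - q)) ^ k *
      ∑ j ∈ Finset.range (k + 1),
        (k.choose j : ℚ_[p]) * (-1 : ℚ_[p]) ^ j / (1 + q ^ (j + 1))) :
    Tendsto (fun N : ℕ =>
        ((1 + q) / (1 + q ^ p ^ N)) *
          ∑ t ∈ Finset.range (p ^ N), ((1 - q ^ (x + t)) / (1 - q)) ^ n * (-q) ^ t)
      atTop
      (nhds (∑ k ∈ Finset.range (n + 1),
        (n.choose k : ℚ_[p]) * q ^ (k * x) * E k * ((1 - q ^ x) / (1 - q)) ^ (n - k))) := by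
  have hD : (1 : ℚ_[p]) - q ≠ 0 := sub_ne_zero.mpr (fun h => hq1 h.symm)
  have hDn : ((1 : ℚ_[p]) - q) ^ n ≠ 0 := pow_ne_zero _ hD
  have hne : ∀ m : ℕ, (1 : ℚ_[p]) + q ^ m ≠ 0 := fun m => aux_one_add_pow_ne hodd hq m
  have h2 : (1 : ℚ_[p]) + 1 ≠ 0 := by
    have := hne 0; simpa using this
  set g : ℚ_[p] → ℚ_[p] := fun y => ((1 + q) / (1 + y)) *
      ∑ j ∈ Finset.range (n + 1),
        ((n.choose j : ℚ_[p]) * (-1) ^ j * q ^ (j * x) / ((1 - q) ^ n * (1 + q ^ (j + 1)))) *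
          (1 + y ^ (j + 1)) with hg
  -- Claim A : each term of the sequence equals g (q ^ p ^ N)
  have claimA : ∀ N : ℕ,
      g (q ^ p ^ N) = ((1 + q) / (1 + q ^ p ^ N)) *
        ∑ t ∈ Finset.range (p ^ N), ((1 - q ^ (x + t)) / (1 - q)) ^ n * (-q) ^ t := by
    intro N
    have hModd : Odd (p ^ N) := hodd.pow
    rw [hg]
    simp only
    congr 1
    have expand : ∀ t : ℕ, ((1 - q ^ (x + t)) / (1 - q)) ^ n * (-q) ^ t
        = ∑ j ∈ Finset.range (n + 1),
            ((n.choose j : ℚ_[p]) * (-1) ^ j * q ^ (j * x) / (1 - q) ^ n) * (-(q ^ (j + 1))) ^ t := by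
      intro t
      have h1 : (1 : ℚ_[p]) - q ^ (x + t) = (-(q ^ (x + t))) + 1 := by ring
      rw [div_pow, h1, add_pow, Finset.sum_div, Finset.sum_mul]
      exact Finset.sum_congr rfl fun j _ => by ring
    rw [Finset.sum_congr rfl fun t _ => expand t, Finset.sum_comm]
    apply Finset.sum_congr rfl
    intro j _
    rw [← Finset.mul_sum]
    have hr1 : -(q ^ (j + 1)) ≠ 1 := by
      intro h
      exact hne (j + 1) (by linear_combination -h)
    rw [geom_sum_eq hr1]
    have hnum : (-(q ^ (j + 1))) ^ p ^ N - 1 = -(1 + (q ^ p ^ N) ^ (j + 1)) := by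
      rw [hModd.neg_pow, ← pow_mul, mul_comm (j + 1) (p ^ N), pow_mul]
      ring
    have hden : -(q ^ (j + 1)) - 1 = -(1 + q ^ (j + 1)) := by ring
    rw [hnum, hden, neg_div_neg_eq, div_mul_div_comm, div_mul_eq_mul_div]
  -- Claim B : g 1 equals the limit value
  have claimB : g 1 = ∑ k ∈ Finset.range (n + 1),
      (n.choose k : ℚ_[p]) * q ^ (k * x) * E k * ((1 - q ^ x) / (1 - q)) ^ (n - k) := by
    have hC : g 1 = (1 + q) * ∑ j ∈ Finset.range (n + 1),
        (n.choose j : ℚ_[p]) * (-1) ^ j * q ^ (j * x) / ((1 - q) ^ n * (1 + q ^ (j + 1))) := by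
      rw [hg]
      simp only [one_pow]
      rw [Finset.mul_sum, Finset.mul_sum]
      apply Finset.sum_congr rfl
      intro j _
      have h3 := hne (j + 1)
      field_simp
    have step1 : ∀ k ∈ Finset.range (n + 1),
        (n.choose k : ℚ_[p]) * q ^ (k * x) * E k * ((1 - q ^ x) / (1 - q)) ^ (n - k)
        = ∑ j ∈ Finset.range (k + 1),
            (1 + q) * ((n.choose k : ℚ_[p]) * (k.choose j : ℚ_[p]) * (q ^ x) ^ k
              * (1 - q ^ x) ^ (n - k))
              * ((-1) ^ j / ((1 - q) ^ n * (1 + q ^ (j + 1)))) := by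
      intro k hk
      have hkn : k ≤ n := by simpa [Nat.lt_succ_iff] using hk
      rw [hE k, Finset.mul_sum, Finset.mul_sum, Finset.sum_mul]
      apply Finset.sum_congr rfl
      intro j _
      have h3 := hne (j + 1)
      have hpow : ((1:ℚ_[p]) - q) ^ k * (1 - q) ^ (n - k) = (1 - q) ^ n := by
        rw [← pow_add]; congr 1; omega
      have hqx : q ^ (k * x) = (q ^ x) ^ k := by rw [← pow_mul, mul_comm]
      rw [hqx, ← hpow, div_pow, div_pow, one_pow]
      field_simp
    rw [hC]
    calc (1 + q) * ∑ j ∈ Finset.range (n + 1),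
          (n.choose j : ℚ_[p]) * (-1) ^ j * q ^ (j * x) / ((1 - q) ^ n * (1 + q ^ (j + 1)))
        = ∑ j ∈ Finset.range (n + 1), ∑ k ∈ Finset.Ico j (n + 1),
            (1 + q) * ((n.choose k : ℚ_[p]) * (k.choose j : ℚ_[p]) * (q ^ x) ^ k
              * (1 - q ^ x) ^ (n - k))
              * ((-1) ^ j / ((1 - q) ^ n * (1 + q ^ (j + 1)))) := by
          rw [Finset.mul_sum]
          apply Finset.sum_congr rfl
          intro j hj
          have hjn : j ≤ n := by simpa [Nat.lt_succ_iff] using hj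
          have hinner := binom_inner (q ^ x) (1 - q ^ x) (by ring) n j hjn
          have : ∑ k ∈ Finset.Ico j (n + 1),
              (1 + q) * ((n.choose k : ℚ_[p]) * (k.choose j : ℚ_[p]) * (q ^ x) ^ k
                * (1 - q ^ x) ^ (n - k))
                * ((-1) ^ j / ((1 - q) ^ n * (1 + q ^ (j + 1))))
              = (1 + q) * ((n.choose j : ℚ_[p]) * (q ^ x) ^ j)
                * ((-1) ^ j / ((1 - q) ^ n * (1 + q ^ (j + 1)))) := by
            rw [← hinner, Finset.mul_sum, Finset.sum_mul]
          rw [this]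
          have hqx : (q ^ x) ^ j = q ^ (j * x) := by rw [← pow_mul, mul_comm]
          rw [hqx]
          ring
      _ = ∑ k ∈ Finset.range (n + 1), ∑ j ∈ Finset.range (k + 1),
            (1 + q) * ((n.choose k : ℚ_[p]) * (k.choose j : ℚ_[p]) * (q ^ x) ^ k
              * (1 - q ^ x) ^ (n - k))
              * ((-1) ^ j / ((1 - q) ^ n * (1 + q ^ (j + 1)))) := by
          refine (Finset.sum_comm' ?_).symm
          intro k j
          simp only [Finset.mem_range, Finset.mem_Ico, Nat.lt_succ_iff]
          omega
      _ = ∑ k ∈ Finset.range (n + 1),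
            (n.choose k : ℚ_[p]) * q ^ (k * x) * E k * ((1 - q ^ x) / (1 - q)) ^ (n - k) :=
          (Finset.sum_congr rfl step1).symm
  -- Claim C : continuity of g at 1
  have claimC : ContinuousAt g 1 := by
    rw [hg]
    apply ContinuousAt.mul
    · exact ContinuousAt.div continuousAt_const (by fun_prop) (by simpa using h2)
    · exact (continuous_finset_sum _ fun j _ => by fun_prop).continuousAt
  have htends : Tendsto (fun N : ℕ => g (q ^ p ^ N)) atTop (nhds (g 1)) :=
    (claimC.tendsto).comp (aux_tendsto hq)
  rw [claimB] at htends
  exact htends.congr claimA
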